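/- Let S be a q×q real symmetric positive definite matrix, let η ≥ 0, and set β = η/(1+η). Then the matrix Σ̂ = (1−β)S + βI_q is the unique minimizer, over all q×q real symmetric positive definite matrices Σ, of the function Σ ↦ tr(Σ⁻¹S) + log det(Σ) + η·(tr(Σ⁻¹) + log det(Σ)). -/

import Mathlib

/-!
Since `F A = (1 + η) (tr (A⁻¹ Σ̂) + log det A)`, it suffices that a positive definite `P` is the
unique minimiser of the Gaussian negative log-likelihood `A ↦ tr (A⁻¹ P) + log det A`. Writing
`P = Bᴴ B` and `X = B A⁻¹ Bᴴ`, the excess over the value at `P` is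
`tr X - log det X - q = ∑ᵢ (λᵢ - 1 - log λᵢ)` over the eigenvalues of `X`; since `log x ≤ x - 1`
with equality only at `x = 1`, it is nonnegative and vanishes only when `X = 1`, i.e. `A = P`.
-/

open Matrix

namespace Matrix

variable {n : Type*} [Fintype n] [DecidableEq n]

theorem IsHermitian.eq_one_of_eigenvalues_eq_one {𝕜 : Type*} [RCLike 𝕜] {A : Matrix n n 𝕜}
    (hA : A.IsHermitian) (h : ∀ i, hA.eigenvalues i = 1) : A = 1 := by
  rw [hA.spectral_theorem, show RCLike.ofReal ∘ hA.eigenvalues = fun _ ↦ (1 : 𝕜) from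
    funext fun i ↦ by simp [h i], diagonal_one, map_one]

theorem PosDef.trace_sub_log_det_eq_sum {X : Matrix n n ℝ} (hX : X.PosDef) :
    X.trace - Real.log X.det = ∑ i, (hX.1.eigenvalues i - Real.log (hX.1.eigenvalues i)) := by
  rw [hX.1.trace_eq_sum_eigenvalues, hX.1.det_eq_prod_eigenvalues, Finset.sum_sub_distrib]
  simp only [RCLike.ofReal_real_eq_id, id]
  rw [Real.log_prod fun i _ ↦ (hX.eigenvalues_pos i).ne']

theorem PosDef.card_le_trace_sub_log_det {X : Matrix n n ℝ} (hX : X.PosDef) :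
    (Fintype.card n : ℝ) ≤ X.trace - Real.log X.det := by
  rw [hX.trace_sub_log_det_eq_sum, ← nsmul_one, ← Finset.card_univ, ← Finset.sum_const]
  exact Finset.sum_le_sum fun i _ ↦ by
    linarith [Real.log_le_sub_one_of_pos (hX.eigenvalues_pos i)]

theorem PosDef.eq_one_of_trace_sub_log_det_le_card {X : Matrix n n ℝ} (hX : X.PosDef)
    (h : X.trace - Real.log X.det ≤ Fintype.card n) : X = 1 := by
  refine hX.1.eq_one_of_eigenvalues_eq_one fun i ↦ ?_
  by_contra hi
  rw [hX.trace_sub_log_det_eq_sum, ← nsmul_one, ← Finset.card_univ, ← Finset.sum_const] at h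
  refine (Finset.sum_lt_sum (fun j _ ↦ ?_) ⟨i, Finset.mem_univ i, ?_⟩).not_ge h
  · linarith [Real.log_le_sub_one_of_pos (hX.eigenvalues_pos j)]
  · linarith [Real.log_lt_sub_one_of_pos (hX.eigenvalues_pos i) hi]

theorem PosDef.exists_eq_conjTranspose_mul_self {P : Matrix n n ℝ} (hP : P.PosDef) :
    ∃ B : Matrix n n ℝ, IsUnit B ∧ P = Bᴴ * B := by
  open scoped MatrixOrder in
  obtain ⟨B, rfl⟩ := CStarAlgebra.nonneg_iff_eq_star_mul_self.mp hP.posSemidef.nonneg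
  refine ⟨B, ?_, rfl⟩
  have := hP.isUnit
  rw [isUnit_iff_isUnit_det, det_mul] at this
  exact (isUnit_iff_isUnit_det B).mpr (isUnit_of_mul_isUnit_right this)

/-- Twice the negative log-likelihood of the centred Gaussian with covariance `A` at the sample
covariance `P`, up to an additive constant. -/
noncomputable def gaussianNegLogLik (P A : Matrix n n ℝ) : ℝ :=
  (A⁻¹ * P).trace + Real.log A.det

theorem gaussianNegLogLik_self {P : Matrix n n ℝ} (hP : IsUnit P.det) :
    gaussianNegLogLik P P = Fintype.card n + Real.log P.det := by
  rw [gaussianNegLogLik, nonsing_inv_mul P hP, trace_one]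

theorem gaussianNegLogLik_add_mul {a : ℝ} (ha : 1 + a ≠ 0) (P Q A : Matrix n n ℝ) :
    gaussianNegLogLik P A + a * gaussianNegLogLik Q A =
      (1 + a) * gaussianNegLogLik ((1 + a)⁻¹ • (P + a • Q)) A := by
  simp only [gaussianNegLogLik, Matrix.mul_smul, Matrix.mul_add, trace_smul, trace_add,
    smul_eq_mul]
  field_simp
  ring

theorem gaussianNegLogLik_conjTranspose_mul_self {B A : Matrix n n ℝ} (hB : IsUnit B)
    (hA : IsUnit A.det) :
    gaussianNegLogLik (Bᴴ * B) A =
      (B * A⁻¹ * Bᴴ).trace - Real.log (B * A⁻¹ * Bᴴ).det + Real.log (Bᴴ * B).det := by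
  have hBdet : B.det ≠ 0 := ((isUnit_iff_isUnit_det B).mp hB).ne_zero
  have hBHdet : Bᴴ.det ≠ 0 := by simpa [det_conjTranspose] using hBdet
  have htr : (B * A⁻¹ * Bᴴ).trace = (A⁻¹ * (Bᴴ * B)).trace := by
    rw [trace_mul_cycle, trace_mul_comm]
  rw [gaussianNegLogLik, htr]
  simp only [det_mul, det_nonsing_inv, Ring.inverse_eq_inv]
  rw [Real.log_mul (mul_ne_zero hBdet (inv_ne_zero hA.ne_zero)) hBHdet,
    Real.log_mul hBdet (inv_ne_zero hA.ne_zero), Real.log_inv, Real.log_mul hBHdet hBdet]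
  ring

theorem gaussianNegLogLik_self_le {P A : Matrix n n ℝ} (hP : P.PosDef) (hA : A.PosDef) :
    gaussianNegLogLik P P ≤ gaussianNegLogLik P A := by
  obtain ⟨B, hB, rfl⟩ := hP.exists_eq_conjTranspose_mul_self
  have hX : (B * A⁻¹ * Bᴴ).PosDef :=
    hA.inv.mul_mul_conjTranspose_same (vecMul_injective_iff_isUnit.mpr hB)
  rw [gaussianNegLogLik_self hP.det_pos.ne'.isUnit,
    gaussianNegLogLik_conjTranspose_mul_self hB hA.det_pos.ne'.isUnit]
  linarith [hX.card_le_trace_sub_log_det]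

theorem eq_conjTranspose_mul_self_of_mul_inv_mul_eq_one {R : Type*} [CommRing R] [StarRing R]
    {B A : Matrix n n R} (hA : IsUnit A.det) (h : B * A⁻¹ * Bᴴ = 1) : A = Bᴴ * B := by
  rw [Matrix.mul_assoc, mul_eq_one_comm, Matrix.mul_assoc] at h
  rw [← nonsing_inv_nonsing_inv A hA, inv_eq_right_inv h]

theorem eq_of_gaussianNegLogLik_le_self {P A : Matrix n n ℝ} (hP : P.PosDef) (hA : A.PosDef)
    (h : gaussianNegLogLik P A ≤ gaussianNegLogLik P P) : A = P := by
  obtain ⟨B, hB, rfl⟩ := hP.exists_eq_conjTranspose_mul_self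
  have hX : (B * A⁻¹ * Bᴴ).PosDef :=
    hA.inv.mul_mul_conjTranspose_same (vecMul_injective_iff_isUnit.mpr hB)
  rw [gaussianNegLogLik_self hP.det_pos.ne'.isUnit,
    gaussianNegLogLik_conjTranspose_mul_self hB hA.det_pos.ne'.isUnit] at h
  exact eq_conjTranspose_mul_self_of_mul_inv_mul_eq_one hA.det_pos.ne'.isUnit
    (hX.eq_one_of_trace_sub_log_det_le_card (by linarith))

end Matrix

/-- the Ledoit–Wolf estimator `(1−β)S + βI` with `β = η/(1+η)` is the
unique minimizer over positive definite matrices of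
`Σ ↦ tr(Σ⁻¹S) + log det Σ + η (tr(Σ⁻¹) + log det Σ)`. -/
theorem stmt_1 (q : ℕ) (S : Matrix (Fin q) (Fin q) ℝ) (hS : S.PosDef)
    (η : ℝ) (hη : 0 ≤ η) (β : ℝ) (hβ : β = η / (1 + η))
    (Sighat : Matrix (Fin q) (Fin q) ℝ)
    (hSighat : Sighat = (1 - β) • S + β • (1 : Matrix (Fin q) (Fin q) ℝ))
    (F : Matrix (Fin q) (Fin q) ℝ → ℝ)
    (hF : ∀ A : Matrix (Fin q) (Fin q) ℝ,
      F A = (A⁻¹ * S).trace + Real.log A.det + η * ((A⁻¹).trace + Real.log A.det)) :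
    Sighat.PosDef ∧
    ∀ A : Matrix (Fin q) (Fin q) ℝ, A.PosDef →
      F Sighat ≤ F A ∧ (F A = F Sighat → A = Sighat) := by
  have hη₁ : 0 < 1 + η := by linarith
  have hSighat_eq : Sighat = (1 + η)⁻¹ • (S + η • 1) := by
    rw [hSighat, hβ, smul_add, smul_smul]
    congr 2
    · field_simp; ring
    · field_simp
  have hSighat_pd : Sighat.PosDef :=
    hSighat_eq ▸ (hS.add_posSemidef (PosSemidef.one.smul hη)).smul (inv_pos.mpr hη₁)
  have hF_eq (A : Matrix (Fin q) (Fin q) ℝ) : F A = (1 + η) * gaussianNegLogLik Sighat A := by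
    rw [hF, hSighat_eq, ← gaussianNegLogLik_add_mul hη₁.ne', gaussianNegLogLik,
      gaussianNegLogLik, Matrix.mul_one]
  refine ⟨hSighat_pd, fun A hA ↦ ⟨?_, fun h ↦ ?_⟩⟩
  · rw [hF_eq, hF_eq]
    exact mul_le_mul_of_nonneg_left (gaussianNegLogLik_self_le hSighat_pd hA) hη₁.le
  · rw [hF_eq, hF_eq] at h
    exact eq_of_gaussianNegLogLik_le_self hSighat_pd hA (mul_left_cancel₀ hη₁.ne' h).le
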